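/- Let K be a field of characteristic different from 2 and let (A,d_A) and (B,d_B) be graded commutative dg-division rings over K, with a dg-extension φ:(B,d_B)→(A,d_A). If (B,d_B) is acyclic, then (A,d_A) is acyclic, and the dg-extension φ is dg-separable if and only if the induced graded-extension ker(d_B)→ker(d_A) is graded-separable. -/

import Mathlib

open scoped TensorProduct

section DGCore

variable {A : Type} [Ring A] {B : Type} [Ring B]

/-- `(A, d)` together with the grading `𝒜` is a differential graded ring:
`d` is a square-zero additive endomorphism of degree `1` satisfying the graded
Leibniz rule. -/
structure IsDGRing (𝒜 : ℤ → AddSubgroup A) (d : A →+ A) : Prop where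
  d_sq : ∀ x, d (d x) = 0
  d_mem : ∀ (i : ℤ), ∀ x ∈ 𝒜 i, d x ∈ 𝒜 (i + 1)
  leibniz : ∀ (i : ℤ) (a b : A), a ∈ 𝒜 i →
    d (a * b) = d a * b + ((Int.negOnePow i : ℤ)) • (a * d b)

/-- A homomorphism of differential graded rings (a dg-extension). -/
structure IsDGHom (𝒜 : ℤ → AddSubgroup A) (dA : A →+ A)
    (𝒝 : ℤ → AddSubgroup B) (dB : B →+ B) (φ : A →+* B) : Prop where
  map_mem : ∀ (i : ℤ), ∀ x ∈ 𝒜 i, φ x ∈ 𝒝 i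
  map_d : ∀ x, φ (dA x) = dB (φ x)

/-- Graded commutativity: `a * b = (-1)^{|a||b|} b * a` for homogeneous elements. -/
def IsGradedComm (𝒜 : ℤ → AddSubgroup A) : Prop :=
  ∀ (i j : ℤ) (a b : A), a ∈ 𝒜 i → b ∈ 𝒜 j →
    a * b = ((Int.negOnePow (i * j) : ℤ)) • (b * a)

/-- A dg-ring is acyclic if its homology vanishes, i.e. every cycle is a boundary. -/
def IsAcyclic (d : A →+ A) : Prop := ∀ x, d x = 0 → ∃ y, d y = x

/-- A dg left ideal: a graded additive subgroup closed under the differential and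
under left multiplication. -/
def IsDGLeftIdeal (𝒜 : ℤ → AddSubgroup A) [GradedRing 𝒜] (d : A →+ A)
    (I : AddSubgroup A) : Prop :=
  (∀ (a : A), ∀ x ∈ I, a * x ∈ I) ∧ (∀ x ∈ I, d x ∈ I) ∧
    (∀ x ∈ I, ∀ i : ℤ, (DirectSum.decompose 𝒜 x i : A) ∈ I)

/-- A dg right ideal. -/
def IsDGRightIdeal (𝒜 : ℤ → AddSubgroup A) [GradedRing 𝒜] (d : A →+ A)
    (I : AddSubgroup A) : Prop :=
  (∀ (a : A), ∀ x ∈ I, x * a ∈ I) ∧ (∀ x ∈ I, d x ∈ I) ∧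
    (∀ x ∈ I, ∀ i : ℤ, (DirectSum.decompose 𝒜 x i : A) ∈ I)

/-- A dg-division ring: the only dg left ideals and the only dg right ideals
are `0` and the whole ring. -/
def IsDGDivisionRing (𝒜 : ℤ → AddSubgroup A) [GradedRing 𝒜] (d : A →+ A) : Prop :=
  (0 : A) ≠ 1 ∧ (∀ I, IsDGLeftIdeal 𝒜 d I → I = ⊥ ∨ I = ⊤) ∧
    (∀ I, IsDGRightIdeal 𝒜 d I → I = ⊥ ∨ I = ⊤)

/-- A graded division ring (gr-field): every nonzero homogeneous element is invertible. -/
def IsGradedDivisionRing (𝒜 : ℤ → AddSubgroup A) : Prop :=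
  (0 : A) ≠ 1 ∧ ∀ (i : ℤ) (x : A), x ∈ 𝒜 i → x ≠ 0 → IsUnit x

/-- The relations defining `B ⊗[A] B` inside `B ⊗[ℤ] B`, for an extension `φ : A →+* B`. -/
def sepRel (φ : A →+* B) : Submodule ℤ (B ⊗[ℤ] B) :=
  Submodule.span ℤ {x | ∃ (b b' : B) (a : A),
    x = (b * φ a) ⊗ₜ[ℤ] b' - b ⊗ₜ[ℤ] (φ a * b')}

/-- The balanced tensor product `B ⊗[A] B` for an extension `φ : A →+* B`. -/
abbrev SepTensor (φ : A →+* B) := (B ⊗[ℤ] B) ⧸ sepRel φ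

/-- The canonical projection `B ⊗[ℤ] B → B ⊗[A] B`. -/
noncomputable def sepMk (φ : A →+* B) : B ⊗[ℤ] B →ₗ[ℤ] SepTensor φ := (sepRel φ).mkQ

/-- The multiplication map `μ : B ⊗[A] B → B`. -/
noncomputable def sepMul (φ : A →+* B) : SepTensor φ →ₗ[ℤ] B :=
  Submodule.liftQ _ (TensorProduct.lift (LinearMap.mul ℤ B)) (by
    rw [sepRel, Submodule.span_le]
    rintro x ⟨b, b', a, rfl⟩
    change (TensorProduct.lift (LinearMap.mul ℤ B)) ((b * φ a) ⊗ₜ[ℤ] b' - b ⊗ₜ[ℤ] (φ a * b')) = 0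
    erw [map_sub, TensorProduct.lift.tmul, TensorProduct.lift.tmul]
    simp [mul_assoc])

/-- Left multiplication by `b` on `B ⊗[A] B`. -/
noncomputable def sepLMul (φ : A →+* B) (b : B) : SepTensor φ →ₗ[ℤ] SepTensor φ :=
  Submodule.mapQ _ _ (TensorProduct.map (LinearMap.mulLeft ℤ b) LinearMap.id) (by
    rw [sepRel, Submodule.span_le]
    rintro x ⟨b₀, b', a, rfl⟩
    simp only [SetLike.mem_coe, Submodule.mem_comap, map_sub, TensorProduct.map_tmul,
      LinearMap.mulLeft_apply, LinearMap.id_apply]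
    exact Submodule.subset_span ⟨b * b₀, b', a, by
      erw [map_sub, TensorProduct.map_tmul, TensorProduct.map_tmul]
      simp [mul_assoc]⟩)

/-- Right multiplication by `b` on `B ⊗[A] B`. -/
noncomputable def sepRMul (φ : A →+* B) (b : B) : SepTensor φ →ₗ[ℤ] SepTensor φ :=
  Submodule.mapQ _ _ (TensorProduct.map LinearMap.id (LinearMap.mulRight ℤ b)) (by
    rw [sepRel, Submodule.span_le]
    rintro x ⟨b₀, b', a, rfl⟩
    simp only [SetLike.mem_coe, Submodule.mem_comap, map_sub, TensorProduct.map_tmul,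
      LinearMap.mulRight_apply, LinearMap.id_apply]
    exact Submodule.subset_span ⟨b₀, b' * b, a, by
      erw [map_sub, TensorProduct.map_tmul, TensorProduct.map_tmul]
      simp [mul_assoc]⟩)

/-- The grading on `B ⊗[A] B`: the degree `n` part is generated by the classes of
`b ⊗ b'` with `b, b'` homogeneous of degrees summing to `n`. -/
noncomputable def sepGrading (φ : A →+* B) (𝒝 : ℤ → AddSubgroup B) (n : ℤ) :
    AddSubgroup (SepTensor φ) :=
  AddSubgroup.closure {x | ∃ (i j : ℤ) (b b' : B), b ∈ 𝒝 i ∧ b' ∈ 𝒝 j ∧ i + j = n ∧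
    x = sepMk φ (b ⊗ₜ[ℤ] b')}

/-- The sign involution `b ↦ (-1)^{|b|} b` of a graded ring. -/
noncomputable def signMap (𝒝 : ℤ → AddSubgroup B) [GradedRing 𝒝] : B →+ B :=
  (DirectSum.toAddMonoid fun i =>
      (smulAddHom ℤ B ((Int.negOnePow i : ℤ))).comp (𝒝 i).subtype).comp
    (DirectSum.decomposeAddEquiv 𝒝).toAddMonoidHom

lemma signMap_of_mem (𝒝 : ℤ → AddSubgroup B) [GradedRing 𝒝] {i : ℤ} {x : B}
    (hx : x ∈ 𝒝 i) : signMap 𝒝 x = ((Int.negOnePow i : ℤ)) • x := by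
  classical
  unfold signMap
  simp only [AddMonoidHom.comp_apply, AddEquiv.coe_toAddMonoidHom,
    DirectSum.decomposeAddEquiv_apply, DirectSum.decompose_of_mem 𝒝 hx,
    DirectSum.toAddMonoid_of]
  rfl

/-- The differential `d ⊗ 1 + ε ⊗ d` on `B ⊗[ℤ] B` (with Koszul sign). -/
noncomputable def sepDiffPre (𝒝 : ℤ → AddSubgroup B) [GradedRing 𝒝] (dB : B →+ B) :
    B ⊗[ℤ] B →ₗ[ℤ] B ⊗[ℤ] B :=
  TensorProduct.map dB.toIntLinearMap LinearMap.id +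
    TensorProduct.map (signMap 𝒝).toIntLinearMap dB.toIntLinearMap

/-- `D` is the differential induced on `B ⊗[A] B` by `d_B ⊗ 1 + ε ⊗ d_B`. -/
def IsSepDiff (φ : A →+* B) (𝒝 : ℤ → AddSubgroup B) [GradedRing 𝒝] (dB : B →+ B)
    (D : SepTensor φ →+ SepTensor φ) : Prop :=
  ∀ x : B ⊗[ℤ] B, D (sepMk φ x) = sepMk φ (sepDiffPre 𝒝 dB x)

/-- `ρ : B → B ⊗[A] B` is a `B`-`B`-bimodule section of the multiplication map. -/
def IsSepSection (φ : A →+* B) (ρ : B →+ SepTensor φ) : Prop :=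
  (∀ b, sepMul φ (ρ b) = b) ∧
    (∀ (b₁ c b₂ : B), ρ (b₁ * c * b₂) = sepLMul φ b₁ (sepRMul φ b₂ (ρ c)))

/-- The extension `φ : A →+* B` is separable: the multiplication map
`B ⊗[A] B → B` splits as a bimodule map. -/
def IsSeparableExt (φ : A →+* B) : Prop := ∃ ρ : B →+ SepTensor φ, IsSepSection φ ρ

/-- The extension `φ : A →+* B` of graded rings is graded-separable: the multiplication
map `B ⊗[A] B → B` splits as a map of graded bimodules. -/
def IsGrSeparable (φ : A →+* B) (𝒝 : ℤ → AddSubgroup B) : Prop :=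
  ∃ ρ : B →+ SepTensor φ, IsSepSection φ ρ ∧
    ∀ (n : ℤ), ∀ b ∈ 𝒝 n, ρ b ∈ sepGrading φ 𝒝 n

/-- The dg-extension `φ : (A,d_A) →  (B,d_B)` is dg-separable: the multiplication map
`B ⊗[A] B → B` splits as a map of differential graded bimodules. -/
def IsDGSeparable (φ : A →+* B) (𝒝 : ℤ → AddSubgroup B) [GradedRing 𝒝]
    (dB : B →+ B) : Prop :=
  ∃ D : SepTensor φ →+ SepTensor φ, IsSepDiff φ 𝒝 dB D ∧
    ∃ ρ : B →+ SepTensor φ, IsSepSection φ ρ ∧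
      (∀ (n : ℤ), ∀ b ∈ 𝒝 n, ρ b ∈ sepGrading φ 𝒝 n) ∧
      (∀ b, D (ρ b) = ρ (dB b))

end DGCore

section Cycles

variable {A : Type} [Ring A] {B : Type} [Ring B]

lemma IsDGRing.leibniz_total {𝒜 : ℤ → AddSubgroup A} [GradedRing 𝒜] {d : A →+ A}
    (h : IsDGRing 𝒜 d) (a b : A) :
    d (a * b) = d a * b + signMap 𝒜 a * d b := by
  induction a using DirectSum.Decomposition.inductionOn 𝒜 with
  | zero => simp
  | @homogeneous i x =>
      obtain ⟨x, hx⟩ := x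
      rw [h.leibniz i x b hx, signMap_of_mem 𝒜 hx, smul_mul_assoc]
  | add a a' ha ha' =>
      rw [add_mul, map_add, ha, ha', map_add, map_add, add_mul, add_mul]
      abel

/-- The subring of cycles `ker d` of a dg-ring `(A, d)`. -/
def cyclesSubring (𝒜 : ℤ → AddSubgroup A) [GradedRing 𝒜] (d : A →+ A)
    (h : IsDGRing 𝒜 d) : Subring A where
  carrier := {x | d x = 0}
  zero_mem' := map_zero d
  add_mem' := by
    intro x y hx hy
    simp only [Set.mem_setOf_eq] at *
    rw [map_add, hx, hy, add_zero]
  neg_mem' := by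
    intro x hx
    simp only [Set.mem_setOf_eq] at *
    rw [map_neg, hx, neg_zero]
  one_mem' := by
    have h2 : d ((1 : A) * 1) = d 1 * 1 + ((Int.negOnePow 0 : ℤ)) • ((1 : A) * d 1) :=
      h.leibniz 0 1 1 (SetLike.one_mem_graded 𝒜)
    simp only [one_mul, mul_one, Int.negOnePow_zero, Units.val_one, one_smul] at h2
    have h3 : d (1 : A) + 0 = d 1 + d 1 := by rw [add_zero]; exact h2
    exact (add_left_cancel h3).symm
  mul_mem' := by
    intro x y hx hy
    simp only [Set.mem_setOf_eq] at *
    rw [h.leibniz_total x y, hx, hy, zero_mul, mul_zero, add_zero]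

/-- The grading on the subring of cycles, inherited from the ambient graded ring. -/
def cyclesGrading (𝒜 : ℤ → AddSubgroup A) [GradedRing 𝒜] (d : A →+ A)
    (h : IsDGRing 𝒜 d) : ℤ → AddSubgroup (cyclesSubring 𝒜 d h) :=
  fun i => (𝒜 i).comap (cyclesSubring 𝒜 d h).subtype.toAddMonoidHom

end Cycles

/-!
Acyclicity of `B` provides `w ∈ B` of degree `-1` with `d w = 1` (the degree `-1` component of any
preimage of `1`); its image `z = φ w` satisfies `d z = 1`, and `z * z = 0` since graded
commutativity gives `z * z = -(z * z)` and `2` is invertible. Then `x = P x + z * d x` with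
`P x = x - z * d x`, a ring homomorphism from `A` onto `Z = ker d_A`; in particular `A` is acyclic.
A graded bimodule splitting of `A ⊗[B] A → A` is pushed along `P` to one of `Z ⊗[W] Z → Z`.
Conversely, a graded splitting `ρ₀` over the cycles gives `G = ρ₀ ∘ P` (viewed in `A ⊗[B] A`), and
`x ↦ G x + z * G (d x)` is a graded bimodule splitting that commutes with the differentials:
`G` takes values in cycles of the differential and `D (z * ξ) = ξ - z * D ξ`.
-/


section GradedRing

variable {A : Type} [Ring A] {𝒜 : ℤ → AddSubgroup A} [GradedRing 𝒜]

lemma signMap_mul (x y : A) : signMap 𝒜 (x * y) = signMap 𝒜 x * signMap 𝒜 y := by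
  induction x using DirectSum.Decomposition.inductionOn 𝒜 with
  | zero => simp
  | add x x' hx hx' => rw [add_mul, map_add, hx, hx', map_add, add_mul]
  | @homogeneous i x =>
    obtain ⟨x, hx⟩ := x
    induction y using DirectSum.Decomposition.inductionOn 𝒜 with
    | zero => simp
    | add y y' hy hy' => rw [mul_add, map_add, hy, hy', map_add, mul_add]
    | @homogeneous j y =>
      obtain ⟨y, hy⟩ := y
      rw [signMap_of_mem 𝒜 hx, signMap_of_mem 𝒜 hy, signMap_of_mem 𝒜 (SetLike.mul_mem_graded hx hy),
        Int.negOnePow_add, Units.val_mul, smul_mul_smul_comm]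

lemma signMap_of_mem_neg_one {z : A} (hz : z ∈ 𝒜 (-1)) : signMap 𝒜 z = -z := by
  simp [signMap_of_mem 𝒜 hz]

lemma IsGradedComm.mul_eq_mul_signMap (hcomm : IsGradedComm 𝒜) {z : A} (hz : z ∈ 𝒜 (-1))
    (x : A) : x * z = z * signMap 𝒜 x := by
  induction x using DirectSum.Decomposition.inductionOn 𝒜 with
  | zero => simp
  | add x x' hx hx' => rw [add_mul, map_add, hx, hx', mul_add]
  | @homogeneous i x =>
    obtain ⟨x, hx⟩ := x
    rw [hcomm i (-1) x z hx hz, signMap_of_mem 𝒜 hx, mul_smul_comm, mul_neg_one,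
      Int.negOnePow_neg]

end GradedRing

lemma IsGradedComm.mul_self_eq_zero {A K : Type} [Ring A] [Field K] [Module K A]
    {𝒜 : ℤ → AddSubgroup A} (hK : (2 : K) ≠ 0) (hcomm : IsGradedComm 𝒜) {z : A}
    (hz : z ∈ 𝒜 (-1)) : z * z = 0 := by
  have hneg : z * z = -(z * z) := by
    simpa using hcomm (-1) (-1) z z hz hz
  have htwo : (2 : K) • (z * z) = 0 := by
    rw [two_smul]
    nth_rewrite 1 [hneg]
    exact neg_add_cancel _
  simpa [hK] using htwo

section DGRing

variable {A : Type} [Ring A] {𝒜 : ℤ → AddSubgroup A} [GradedRing 𝒜] {d : A →+ A}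

lemma IsDGRing.map_one (h : IsDGRing 𝒜 d) : d 1 = 0 :=
  (cyclesSubring 𝒜 d h).one_mem

lemma IsDGRing.map_signMap (h : IsDGRing 𝒜 d) (x : A) : d (signMap 𝒜 x) = -signMap 𝒜 (d x) := by
  induction x using DirectSum.Decomposition.inductionOn 𝒜 with
  | zero => simp
  | add x x' hx hx' => rw [map_add, map_add, hx, hx', map_add, map_add, neg_add]
  | @homogeneous i x =>
    obtain ⟨x, hx⟩ := x
    rw [signMap_of_mem 𝒜 hx, signMap_of_mem 𝒜 (h.d_mem i x hx), map_zsmul, Int.negOnePow_succ]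
    simp

lemma IsDGRing.map_mul_of_cycle_left (h : IsDGRing 𝒜 d) {c : A} (hc : d c = 0) (x : A) :
    d (c * x) = signMap 𝒜 c * d x := by
  rw [h.leibniz_total, hc, zero_mul, zero_add]

lemma IsDGRing.map_mul_of_cycle_right (h : IsDGRing 𝒜 d) {c : A} (hc : d c = 0) (x : A) :
    d (x * c) = d x * c := by
  rw [h.leibniz_total, hc, mul_zero, add_zero]

lemma IsDGRing.map_decompose (h : IsDGRing 𝒜 d) (x : A) (i : ℤ) :
    d (DirectSum.decompose 𝒜 x i) = DirectSum.decompose 𝒜 (d x) (i + 1) := by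
  induction x using DirectSum.Decomposition.inductionOn 𝒜 with
  | zero => simp
  | add x x' hx hx' => simp only [DirectSum.decompose_add, DirectSum.add_apply,
      AddSubgroup.coe_add, map_add, hx, hx']
  | @homogeneous j x =>
    obtain ⟨x, hx⟩ := x
    by_cases hij : j = i
    · subst hij
      rw [DirectSum.decompose_of_mem_same 𝒜 hx, DirectSum.decompose_of_mem_same 𝒜 (h.d_mem j x hx)]
    · rw [DirectSum.decompose_of_mem_ne 𝒜 hx hij,
        DirectSum.decompose_of_mem_ne 𝒜 (h.d_mem j x hx) (by omega), map_zero]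

end DGRing

section SepTensor

variable {R S : Type} [Ring R] [Ring S] {f : R →+* S}

theorem SepTensor.induction_on {P : SepTensor f → Prop} (ξ : SepTensor f) (zero : P 0)
    (tmul : ∀ b b' : S, P (sepMk f (b ⊗ₜ[ℤ] b'))) (add : ∀ x y, P x → P y → P (x + y)) :
    P ξ := by
  obtain ⟨x, rfl⟩ := Submodule.mkQ_surjective (sepRel f) ξ
  induction x using TensorProduct.induction_on with
  | zero => simpa using zero
  | tmul b b' => exact tmul b b'
  | add x y hx hy => rw [map_add]; exact add _ _ hx hy

lemma sepMk_mul_tmul (b b' : S) (a : R) :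
    sepMk f ((b * f a) ⊗ₜ[ℤ] b') = sepMk f (b ⊗ₜ[ℤ] (f a * b')) :=
  (Submodule.Quotient.eq _).mpr (Submodule.subset_span ⟨b, b', a, rfl⟩)

lemma sepMul_mk (x y : S) : sepMul f (sepMk f (x ⊗ₜ[ℤ] y)) = x * y := rfl

lemma sepLMul_mk (b x y : S) : sepLMul f b (sepMk f (x ⊗ₜ[ℤ] y)) = sepMk f ((b * x) ⊗ₜ[ℤ] y) :=
  rfl

lemma sepRMul_mk (b x y : S) : sepRMul f b (sepMk f (x ⊗ₜ[ℤ] y)) = sepMk f (x ⊗ₜ[ℤ] (y * b)) :=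
  rfl

lemma sepLMul_one (ξ : SepTensor f) : sepLMul f 1 ξ = ξ := by
  induction ξ using SepTensor.induction_on with
  | zero => simp
  | tmul b b' => rw [sepLMul_mk, one_mul]
  | add x y hx hy => rw [map_add, hx, hy]

lemma sepRMul_one (ξ : SepTensor f) : sepRMul f 1 ξ = ξ := by
  induction ξ using SepTensor.induction_on with
  | zero => simp
  | tmul b b' => rw [sepRMul_mk, mul_one]
  | add x y hx hy => rw [map_add, hx, hy]

lemma sepLMul_zero (ξ : SepTensor f) : sepLMul f 0 ξ = 0 := by
  induction ξ using SepTensor.induction_on with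
  | zero => simp
  | tmul b b' => rw [sepLMul_mk, zero_mul, TensorProduct.zero_tmul, map_zero]
  | add x y hx hy => rw [map_add, hx, hy, add_zero]

lemma sepLMul_mul (b b' : S) (ξ : SepTensor f) :
    sepLMul f (b * b') ξ = sepLMul f b (sepLMul f b' ξ) := by
  induction ξ using SepTensor.induction_on with
  | zero => simp
  | tmul x y => rw [sepLMul_mk, sepLMul_mk, sepLMul_mk, mul_assoc]
  | add x y hx hy => rw [map_add, map_add, hx, hy, map_add]

lemma sepRMul_mul (b b' : S) (ξ : SepTensor f) :
    sepRMul f (b * b') ξ = sepRMul f b' (sepRMul f b ξ) := by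
  induction ξ using SepTensor.induction_on with
  | zero => simp
  | tmul x y => rw [sepRMul_mk, sepRMul_mk, sepRMul_mk, mul_assoc]
  | add x y hx hy => rw [map_add, map_add, hx, hy, map_add]

lemma sepLMul_add (b b' : S) (ξ : SepTensor f) :
    sepLMul f (b + b') ξ = sepLMul f b ξ + sepLMul f b' ξ := by
  induction ξ using SepTensor.induction_on with
  | zero => simp
  | tmul x y => rw [sepLMul_mk, sepLMul_mk, sepLMul_mk, add_mul, TensorProduct.add_tmul, map_add]
  | add x y hx hy => rw [map_add, map_add, map_add, hx, hy, add_add_add_comm]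

lemma sepRMul_add (b b' : S) (ξ : SepTensor f) :
    sepRMul f (b + b') ξ = sepRMul f b ξ + sepRMul f b' ξ := by
  induction ξ using SepTensor.induction_on with
  | zero => simp
  | tmul x y => rw [sepRMul_mk, sepRMul_mk, sepRMul_mk, mul_add, TensorProduct.tmul_add, map_add]
  | add x y hx hy => rw [map_add, map_add, map_add, hx, hy, add_add_add_comm]

lemma sepLMul_sepRMul (b b' : S) (ξ : SepTensor f) :
    sepLMul f b (sepRMul f b' ξ) = sepRMul f b' (sepLMul f b ξ) := by
  induction ξ using SepTensor.induction_on with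
  | zero => simp
  | tmul x y => rfl
  | add x y hx hy => rw [map_add, map_add, hx, hy, map_add, map_add]

lemma sepMul_sepLMul (b : S) (ξ : SepTensor f) : sepMul f (sepLMul f b ξ) = b * sepMul f ξ := by
  induction ξ using SepTensor.induction_on with
  | zero => simp
  | tmul x y => rw [sepLMul_mk, sepMul_mk, sepMul_mk, mul_assoc]
  | add x y hx hy => rw [map_add, map_add, hx, hy, map_add, mul_add]

lemma IsSepSection.map_mul_left {ρ : S →+ SepTensor f} (hρ : IsSepSection f ρ) (b c : S) :
    ρ (b * c) = sepLMul f b (ρ c) := by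
  simpa [sepRMul_one] using hρ.2 b c 1

lemma IsSepSection.map_mul_right {ρ : S →+ SepTensor f} (hρ : IsSepSection f ρ) (c b : S) :
    ρ (c * b) = sepRMul f b (ρ c) := by
  simpa [sepLMul_one] using hρ.2 1 c b

lemma isSepSection_of_map_mul {ρ : S →+ SepTensor f} (hmul : ∀ b, sepMul f (ρ b) = b)
    (hleft : ∀ b c, ρ (b * c) = sepLMul f b (ρ c))
    (hright : ∀ c b, ρ (c * b) = sepRMul f b (ρ c)) : IsSepSection f ρ :=
  ⟨hmul, fun b₁ c b₂ => by rw [hright, hleft, sepLMul_sepRMul]⟩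

lemma sepMk_tmul_mem_sepGrading (𝒮 : ℤ → AddSubgroup S) {i j : ℤ} {b b' : S} (hb : b ∈ 𝒮 i)
    (hb' : b' ∈ 𝒮 j) : sepMk f (b ⊗ₜ[ℤ] b') ∈ sepGrading f 𝒮 (i + j) :=
  AddSubgroup.subset_closure ⟨i, j, b, b', hb, hb', rfl, rfl⟩

lemma sepLMul_mem_sepGrading {𝒮 : ℤ → AddSubgroup S} [SetLike.GradedMul 𝒮] {k n : ℤ} {s : S}
    (hs : s ∈ 𝒮 k) {ξ : SepTensor f} (hξ : ξ ∈ sepGrading f 𝒮 n) :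
    sepLMul f s ξ ∈ sepGrading f 𝒮 (k + n) := by
  induction hξ using AddSubgroup.closure_induction with
  | mem x hx =>
    obtain ⟨i, j, b, b', hb, hb', rfl, rfl⟩ := hx
    rw [sepLMul_mk, ← add_assoc]
    exact sepMk_tmul_mem_sepGrading 𝒮 (SetLike.mul_mem_graded hs hb) hb'
  | zero => rw [map_zero]; exact zero_mem _
  | add x y _ _ hx hy => rw [map_add]; exact add_mem hx hy
  | neg x _ hx => rw [map_neg]; exact neg_mem hx

lemma IsGradedComm.sepRMul_eq_negOnePow_smul_sepLMul {𝒮 : ℤ → AddSubgroup S}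
    (hcomm : IsGradedComm 𝒮) {k n : ℤ} {a : R} (ha : f a ∈ 𝒮 k) {ξ : SepTensor f}
    (hξ : ξ ∈ sepGrading f 𝒮 n) :
    sepRMul f (f a) ξ = (Int.negOnePow (n * k) : ℤ) • sepLMul f (f a) ξ := by
  induction hξ using AddSubgroup.closure_induction with
  | mem x hx =>
    obtain ⟨i, j, b, b', hb, hb', rfl, rfl⟩ := hx
    rw [sepRMul_mk, sepLMul_mk, hcomm j k b' (f a) hb' ha, TensorProduct.tmul_smul, map_zsmul,
      ← sepMk_mul_tmul, hcomm i k b (f a) hb ha, ← TensorProduct.smul_tmul', map_zsmul, smul_smul,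
      ← Units.val_mul, ← Int.negOnePow_add, add_mul, add_comm (j * k)]
  | zero => simp
  | add x y _ _ hx hy => rw [map_add, map_add, hx, hy, smul_add]
  | neg x _ hx => rw [map_neg, map_neg, hx, smul_neg]

end SepTensor

section SepTensorMap

variable {R S R' S' : Type} [Ring R] [Ring S] [Ring R'] [Ring S'] {f : R →+* S}
  {f' : R' →+* S'}

/-- The map `S ⊗[R] S → S' ⊗[R'] S'` induced by a square `α ∘ f = f' ∘ β`; only `α` needs to
be multiplicative. -/
noncomputable def SepTensor.map (α : S →+* S') (β : R → R') (hαβ : ∀ r, α (f r) = f' (β r)) :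
    SepTensor f →ₗ[ℤ] SepTensor f' :=
  Submodule.mapQ _ _
    (TensorProduct.map α.toAddMonoidHom.toIntLinearMap α.toAddMonoidHom.toIntLinearMap) (by
      refine Submodule.span_le.mpr ?_
      rintro _ ⟨b, b', r, rfl⟩
      refine Submodule.subset_span ⟨α b, α b', β r, ?_⟩
      erw [map_sub, TensorProduct.map_tmul, TensorProduct.map_tmul]
      simp [hαβ])

variable {α : S →+* S'} {β : R → R'} {hαβ : ∀ r, α (f r) = f' (β r)}

lemma SepTensor.map_mk (x y : S) :
    SepTensor.map α β hαβ (sepMk f (x ⊗ₜ[ℤ] y)) = sepMk f' (α x ⊗ₜ[ℤ] α y) :=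
  rfl

lemma SepTensor.sepMul_map (ξ : SepTensor f) :
    sepMul f' (SepTensor.map α β hαβ ξ) = α (sepMul f ξ) := by
  induction ξ using SepTensor.induction_on with
  | zero => simp
  | tmul x y => rw [SepTensor.map_mk, sepMul_mk, sepMul_mk, map_mul]
  | add x y hx hy => rw [map_add, map_add, hx, hy, map_add, map_add]

lemma SepTensor.map_sepLMul (s : S) (ξ : SepTensor f) :
    SepTensor.map α β hαβ (sepLMul f s ξ) = sepLMul f' (α s) (SepTensor.map α β hαβ ξ) := by
  induction ξ using SepTensor.induction_on with
  | zero => simp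
  | tmul x y => rw [sepLMul_mk, SepTensor.map_mk, SepTensor.map_mk, sepLMul_mk, map_mul]
  | add x y hx hy => rw [map_add, map_add, hx, hy, map_add, map_add]

lemma SepTensor.map_sepRMul (s : S) (ξ : SepTensor f) :
    SepTensor.map α β hαβ (sepRMul f s ξ) = sepRMul f' (α s) (SepTensor.map α β hαβ ξ) := by
  induction ξ using SepTensor.induction_on with
  | zero => simp
  | tmul x y => rw [sepRMul_mk, SepTensor.map_mk, SepTensor.map_mk, sepRMul_mk, map_mul]
  | add x y hx hy => rw [map_add, map_add, hx, hy, map_add, map_add]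

lemma SepTensor.map_mem_sepGrading {𝒮 : ℤ → AddSubgroup S} {𝒮' : ℤ → AddSubgroup S'}
    (hα : ∀ i, ∀ s ∈ 𝒮 i, α s ∈ 𝒮' i) {n : ℤ} {ξ : SepTensor f} (hξ : ξ ∈ sepGrading f 𝒮 n) :
    SepTensor.map α β hαβ ξ ∈ sepGrading f' 𝒮' n := by
  induction hξ using AddSubgroup.closure_induction with
  | mem x hx =>
    obtain ⟨i, j, b, b', hb, hb', rfl, rfl⟩ := hx
    exact sepMk_tmul_mem_sepGrading 𝒮' (hα i b hb) (hα j b' hb')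
  | zero => rw [map_zero]; exact zero_mem _
  | add x y _ _ hx hy => rw [map_add]; exact add_mem hx hy
  | neg x _ hx => rw [map_neg]; exact neg_mem hx

end SepTensorMap

section SepDiff

variable {A B : Type} [Ring A] [Ring B] {𝒜 : ℤ → AddSubgroup A} [GradedRing 𝒜]
  {𝒝 : ℤ → AddSubgroup B} [GradedRing 𝒝] {dA : A →+ A} {dB : B →+ B} {φ : B →+* A}

lemma sepDiffPre_tmul (x y : A) :
    sepDiffPre 𝒜 dA (x ⊗ₜ[ℤ] y) = dA x ⊗ₜ[ℤ] y + signMap 𝒜 x ⊗ₜ[ℤ] dA y :=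
  rfl

lemma IsDGHom.signMap_map (hφ : IsDGHom 𝒝 dB 𝒜 dA φ) (b : B) :
    signMap 𝒜 (φ b) = φ (signMap 𝒝 b) := by
  induction b using DirectSum.Decomposition.inductionOn 𝒝 with
  | zero => simp
  | add x y hx hy => rw [map_add, map_add, hx, hy, map_add, map_add]
  | @homogeneous i b =>
    obtain ⟨b, hb⟩ := b
    rw [signMap_of_mem 𝒝 hb, map_zsmul, signMap_of_mem 𝒜 (hφ.map_mem i b hb)]

lemma IsDGHom.sepRel_le_comap_sepDiffPre (hA : IsDGRing 𝒜 dA) (hφ : IsDGHom 𝒝 dB 𝒜 dA φ) :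
    sepRel φ ≤ (sepRel φ).comap (sepDiffPre 𝒜 dA) := by
  refine Submodule.span_le.mpr ?_
  rintro _ ⟨x, y, b, rfl⟩
  have hrel : ∀ x y b, (x * φ b) ⊗ₜ[ℤ] y - x ⊗ₜ[ℤ] (φ b * y) ∈ sepRel φ :=
    fun x y b => Submodule.subset_span ⟨x, y, b, rfl⟩
  -- `d_A ⊗ 1 + ε ⊗ d_A` maps the relation for `(x, y, b)` to the sum of those for
  -- `(d x, y, b)`, `(ε x, y, d b)` and `(ε x, d y, ε b)`.
  have hsum := add_mem (add_mem (hrel (dA x) y b) (hrel (signMap 𝒜 x) y (dB b)))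
    (hrel (signMap 𝒜 x) (dA y) (signMap 𝒝 b))
  simp only [SetLike.mem_coe, Submodule.mem_comap, map_sub, sepDiffPre_tmul, hA.leibniz_total,
    signMap_mul, ← hφ.map_d, hφ.signMap_map, TensorProduct.add_tmul, TensorProduct.tmul_add]
  convert hsum using 1
  abel

noncomputable def sepDiff (hA : IsDGRing 𝒜 dA) (hφ : IsDGHom 𝒝 dB 𝒜 dA φ) :
    SepTensor φ →ₗ[ℤ] SepTensor φ :=
  Submodule.mapQ _ _ (sepDiffPre 𝒜 dA) (hφ.sepRel_le_comap_sepDiffPre hA)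

variable (hA : IsDGRing 𝒜 dA) (hφ : IsDGHom 𝒝 dB 𝒜 dA φ)

lemma isSepDiff_sepDiff : IsSepDiff φ 𝒜 dA (sepDiff hA hφ).toAddMonoidHom :=
  fun _ => rfl

lemma sepDiff_mk (x y : A) :
    sepDiff hA hφ (sepMk φ (x ⊗ₜ[ℤ] y)) = sepMk φ (dA x ⊗ₜ[ℤ] y + signMap 𝒜 x ⊗ₜ[ℤ] dA y) :=
  rfl

lemma sepDiff_sepLMul (a : A) (ξ : SepTensor φ) :
    sepDiff hA hφ (sepLMul φ a ξ) =
      sepLMul φ (dA a) ξ + sepLMul φ (signMap 𝒜 a) (sepDiff hA hφ ξ) := by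
  induction ξ using SepTensor.induction_on with
  | zero => simp
  | tmul x y =>
    simp only [sepLMul_mk, sepDiff_mk, map_add, hA.leibniz_total, signMap_mul,
      TensorProduct.add_tmul]
    abel
  | add x y hx hy => rw [map_add, map_add, hx, hy, map_add, map_add, map_add]; abel

lemma sepDiff_map_subtype {W : Type} [Ring W] {ψ : W →+* cyclesSubring 𝒜 dA hA} {β : W → B}
    {hψ : ∀ c, (cyclesSubring 𝒜 dA hA).subtype (ψ c) = φ (β c)} (ζ : SepTensor ψ) :
    sepDiff hA hφ (SepTensor.map (cyclesSubring 𝒜 dA hA).subtype β hψ ζ) = 0 := by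
  induction ζ using SepTensor.induction_on with
  | zero => simp
  | tmul c c' =>
    have hc : dA c = 0 := c.2
    have hc' : dA c' = 0 := c'.2
    simp [SepTensor.map_mk, sepDiff_mk, hc, hc']
  | add x y hx hy => rw [map_add, map_add, hx, hy, add_zero]

end SepDiff

/-- Left multiplication by `z` is then a contracting homotopy: `d (z * x) + z * d x = x`. -/
structure IsContractingElement {A : Type} [Ring A] (𝒜 : ℤ → AddSubgroup A) (d : A →+ A) (z : A) :
    Prop where
  mem : z ∈ 𝒜 (-1)
  d_eq_one : d z = 1

lemma IsContractingElement.map {A B : Type} [Ring A] [Ring B] {𝒜 : ℤ → AddSubgroup A}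
    {d : A →+ A} {𝒝 : ℤ → AddSubgroup B} {dB : B →+ B} {φ : B →+* A}
    (hφ : IsDGHom 𝒝 dB 𝒜 d φ) {w : B} (hw : IsContractingElement 𝒝 dB w) :
    IsContractingElement 𝒜 d (φ w) :=
  ⟨hφ.map_mem _ w hw.mem, by rw [← hφ.map_d, hw.d_eq_one, map_one]⟩

section Contraction

variable {A : Type} [Ring A] {𝒜 : ℤ → AddSubgroup A} [GradedRing 𝒜] {d : A →+ A}
  (h : IsDGRing 𝒜 d) {z : A}

include h in
lemma IsContractingElement.map_mul (hz : IsContractingElement 𝒜 d z) (x : A) :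
    d (z * x) = x - z * d x := by
  rw [h.leibniz_total, hz.d_eq_one, one_mul, signMap_of_mem_neg_one hz.mem, neg_mul,
    sub_eq_add_neg]

include h in
lemma IsContractingElement.isAcyclic (hz : IsContractingElement 𝒜 d z) : IsAcyclic d :=
  fun x hx => ⟨z * x, by rw [hz.map_mul h, hx, mul_zero, sub_zero]⟩

include h in
lemma exists_isContractingElement (hd : IsAcyclic d) : ∃ z, IsContractingElement 𝒜 d z := by
  obtain ⟨y, hy⟩ := hd 1 h.map_one
  refine ⟨DirectSum.decompose 𝒜 y (-1), SetLike.coe_mem _, ?_⟩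
  rw [h.map_decompose, hy, neg_add_cancel,
    DirectSum.decompose_of_mem_same 𝒜 (SetLike.one_mem_graded 𝒜)]

def cyclesProj (hz : IsContractingElement 𝒜 d z) : A →+ cyclesSubring 𝒜 d h where
  toFun x := ⟨x - z * d x, by
    change d _ = 0
    rw [map_sub, hz.map_mul h, h.d_sq, mul_zero, sub_zero, sub_self]⟩
  map_zero' := by ext; simp
  map_add' x y := by ext; simp only [map_add, mul_add, Subring.coe_add]; abel

variable (hz : IsContractingElement 𝒜 d z)

@[simp]
lemma coe_cyclesProj (x : A) : (cyclesProj h hz x : A) = x - z * d x := rfl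

lemma cyclesProj_add_mul_d (x : A) : (cyclesProj h hz x : A) + z * d x = x := by
  rw [coe_cyclesProj, sub_add_cancel]

lemma cyclesProj_of_cycle {x : A} (hx : d x = 0) : cyclesProj h hz x = ⟨x, hx⟩ := by
  ext; simp [hx]

lemma cyclesProj_contraction_mul (hzz : z * z = 0) (x : A) : cyclesProj h hz (z * x) = 0 := by
  ext
  rw [coe_cyclesProj, hz.map_mul h, mul_sub, ← mul_assoc, hzz, zero_mul, sub_zero, sub_self,
    ZeroMemClass.coe_zero]

lemma cyclesProj_mem {i : ℤ} {x : A} (hx : x ∈ 𝒜 i) : (cyclesProj h hz x : A) ∈ 𝒜 i := by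
  have hzdx := SetLike.mul_mem_graded hz.mem (h.d_mem i x hx)
  rw [show -1 + (i + 1) = i by omega] at hzdx
  exact sub_mem hx hzdx

lemma cyclesProj_cycle_mul (hcomm : IsGradedComm 𝒜) {c : A} (hc : d c = 0) (x : A) :
    (cyclesProj h hz (c * x) : A) = c * cyclesProj h hz x := by
  rw [coe_cyclesProj, coe_cyclesProj, h.map_mul_of_cycle_left hc, ← mul_assoc,
    ← hcomm.mul_eq_mul_signMap hz.mem, mul_assoc, mul_sub]

def cyclesProjRingHom (hcomm : IsGradedComm 𝒜) (hzz : z * z = 0) :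
    A →+* cyclesSubring 𝒜 d h where
  __ := cyclesProj h hz
  map_one' := cyclesProj_of_cycle h hz h.map_one
  map_mul' x y := by
    have hxy : x * y = (cyclesProj h hz x : A) * y + z * (d x * y) := by
      rw [← mul_assoc, ← add_mul, cyclesProj_add_mul_d]
    change cyclesProj h hz (x * y) = cyclesProj h hz x * cyclesProj h hz y
    ext
    rw [hxy, map_add, cyclesProj_contraction_mul h hz hzz, add_zero,
      cyclesProj_cycle_mul h hz hcomm (cyclesProj h hz x).2]
    rfl

end Contraction

section Separability

variable {A B : Type} [Ring A] [Ring B] {𝒜 : ℤ → AddSubgroup A} [GradedRing 𝒜]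
  {𝒝 : ℤ → AddSubgroup B} [GradedRing 𝒝] {dA : A →+ A} {dB : B →+ B} {φ : B →+* A}
  {hA : IsDGRing 𝒜 dA} {hB : IsDGRing 𝒝 dB}
  {ψ : cyclesSubring 𝒝 dB hB →+* cyclesSubring 𝒜 dA hA}

lemma IsDGSeparable.isGrSeparable (h : IsDGSeparable φ 𝒜 dA) : IsGrSeparable φ 𝒜 :=
  let ⟨_, _, ρ, hρ, hgr, _⟩ := h
  ⟨ρ, hρ, hgr⟩

lemma cyclesProj_map (hφ : IsDGHom 𝒝 dB 𝒜 dA φ) (hψ : ∀ c, (ψ c : A) = φ c) {w : B}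
    (hw : IsContractingElement 𝒝 dB w) (b : B) :
    cyclesProj hA (hw.map hφ) (φ b) = ψ (cyclesProj hB hw b) := by
  ext
  simp [hψ, ← hφ.map_d]

theorem IsGrSeparable.isGrSeparable_cycles (hcomm : IsGradedComm 𝒜) (hφ : IsDGHom 𝒝 dB 𝒜 dA φ)
    (hψ : ∀ c, (ψ c : A) = φ c) {w : B} (hw : IsContractingElement 𝒝 dB w)
    (hzz : φ w * φ w = 0) (h : IsGrSeparable φ 𝒜) :
    IsGrSeparable ψ (cyclesGrading 𝒜 dA hA) := by
  obtain ⟨ρ, hρ, hgr⟩ := h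
  have hz := hw.map hφ
  let P := cyclesProjRingHom hA hz hcomm hzz
  let π := SepTensor.map P (cyclesProj hB hw) (cyclesProj_map hφ hψ hw)
  have hP : ∀ c : cyclesSubring 𝒜 dA hA, P c = c := fun c => cyclesProj_of_cycle hA hz c.2
  refine ⟨π.toAddMonoidHom.comp (ρ.comp (cyclesSubring 𝒜 dA hA).subtype.toAddMonoidHom),
    isSepSection_of_map_mul (fun c => ?_) (fun c c' => ?_) (fun c c' => ?_), fun n c hc => ?_⟩
  · show sepMul ψ (π (ρ c)) = c
    exact (SepTensor.sepMul_map _).trans (by rw [hρ.1, hP])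
  · show π (ρ (c * c')) = sepLMul ψ c (π (ρ c'))
    rw [hρ.map_mul_left]
    exact (SepTensor.map_sepLMul _ _).trans (by rw [hP])
  · show π (ρ (c * c')) = sepRMul ψ c' (π (ρ c))
    rw [hρ.map_mul_right]
    exact (SepTensor.map_sepRMul _ _).trans (by rw [hP])
  · show π (ρ c) ∈ _
    exact SepTensor.map_mem_sepGrading (fun i _ hx => cyclesProj_mem hA hz hx) (hgr n c hc)

end Separability

section Extension

variable {A B : Type} [Ring A] [Ring B] {𝒜 : ℤ → AddSubgroup A} [GradedRing 𝒜]
  {𝒝 : ℤ → AddSubgroup B} [GradedRing 𝒝] {dA : A →+ A} {dB : B →+ B} {φ : B →+* A}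

/-- The properties of `G x = ρ₀ (x - z * d x)`, for a graded splitting `ρ₀` over the cycles,
from which `extendByContraction` builds a dg-splitting. -/
structure IsCyclesSplitting (hA : IsDGRing 𝒜 dA) (hφ : IsDGHom 𝒝 dB 𝒜 dA φ) (z : A)
    (G : A →+ SepTensor φ) : Prop where
  map_cycle_mul : ∀ c x, dA c = 0 → G (c * x) = sepLMul φ c (G x)
  map_mul_cycle : ∀ x c, dA c = 0 → G (x * c) = sepRMul φ c (G x)
  map_contraction_mul : ∀ x, G (z * x) = 0
  sepMul_map : ∀ x, sepMul φ (G x) = x - z * dA x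
  map_mem : ∀ n, ∀ x ∈ 𝒜 n, G x ∈ sepGrading φ 𝒜 n
  sepDiff_map : ∀ x, sepDiff hA hφ (G x) = 0

noncomputable def extendByContraction (dA : A →+ A) (z : A) (G : A →+ SepTensor φ) :
    A →+ SepTensor φ :=
  G + (sepLMul φ z).toAddMonoidHom.comp (G.comp dA)

lemma extendByContraction_apply (z : A) (G : A →+ SepTensor φ) (x : A) :
    extendByContraction dA z G x = G x + sepLMul φ z (G (dA x)) :=
  rfl

namespace IsCyclesSplitting

variable {hA : IsDGRing 𝒜 dA} {hφ : IsDGHom 𝒝 dB 𝒜 dA φ} {w : B} {G : A →+ SepTensor φ}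
  (hG : IsCyclesSplitting hA hφ (φ w) G) (hz : IsContractingElement 𝒜 dA (φ w))
  (hzz : φ w * φ w = 0) (hcomm : IsGradedComm 𝒜)

local notation "F" => extendByContraction dA (φ w) G

include hG hz hcomm in
lemma extend_cycle_mul {c : A} (hc : dA c = 0) (x : A) : F (c * x) = sepLMul φ c (F x) := by
  have hsc : dA (signMap 𝒜 c) = 0 := by rw [hA.map_signMap, hc, map_zero, neg_zero]
  rw [extendByContraction_apply, extendByContraction_apply, hG.map_cycle_mul c x hc,
    hA.map_mul_of_cycle_left hc, hG.map_cycle_mul _ _ hsc, ← sepLMul_mul,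
    ← hcomm.mul_eq_mul_signMap hz.mem, sepLMul_mul, map_add]

include hG hz hzz in
lemma extend_contraction_mul (x : A) : F (φ w * x) = sepLMul φ (φ w) (F x) := by
  rw [extendByContraction_apply, extendByContraction_apply, hG.map_contraction_mul,
    hz.map_mul hA, map_sub, hG.map_contraction_mul, map_add, ← sepLMul_mul (φ w) (φ w), hzz,
    sepLMul_zero, sub_zero, zero_add, add_zero]

include hG hz hzz hcomm in
lemma extend_mul_left (a x : A) : F (a * x) = sepLMul φ a (F x) := by
  have ha : a * x = (cyclesProj hA hz a : A) * x + φ w * (dA a * x) := by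
    rw [← mul_assoc, ← add_mul, cyclesProj_add_mul_d]
  rw [ha, map_add, hG.extend_cycle_mul hz hcomm (cyclesProj hA hz a).2,
    hG.extend_contraction_mul hz hzz, hG.extend_cycle_mul hz hcomm (hA.d_sq a), ← sepLMul_mul,
    ← sepLMul_add, cyclesProj_add_mul_d]

include hG in
lemma extend_mul_cycle {c : A} (hc : dA c = 0) (x : A) : F (x * c) = sepRMul φ c (F x) := by
  rw [extendByContraction_apply, extendByContraction_apply, hG.map_mul_cycle x c hc,
    hA.map_mul_of_cycle_right hc, hG.map_mul_cycle _ c hc, sepLMul_sepRMul, map_add]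

include hG hz in
lemma extend_mem {n : ℤ} {x : A} (hx : x ∈ 𝒜 n) : F x ∈ sepGrading φ 𝒜 n := by
  have hdx := sepLMul_mem_sepGrading hz.mem (hG.map_mem _ _ (hA.d_mem n x hx))
  rw [show -1 + (n + 1) = n by omega] at hdx
  exact add_mem (hG.map_mem n x hx) hdx

include hG hz hzz hcomm in
lemma extend_mul_contraction (x : A) : F (x * φ w) = sepRMul φ (φ w) (F x) := by
  induction x using DirectSum.Decomposition.inductionOn 𝒜 with
  | zero => simp
  | add x x' hx hx' => rw [add_mul, map_add, hx, hx', map_add, map_add]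
  | @homogeneous i x =>
    obtain ⟨x, hx⟩ := x
    rw [hcomm i (-1) x (φ w) hx hz.mem, map_zsmul, hG.extend_contraction_mul hz hzz,
      hcomm.sepRMul_eq_negOnePow_smul_sepLMul hz.mem (hG.extend_mem hz hx)]

include hG hz hzz hcomm in
lemma extend_mul_right (x a : A) : F (x * a) = sepRMul φ a (F x) := by
  have ha : x * a = x * (cyclesProj hA hz a : A) + x * φ w * dA a := by
    rw [mul_assoc, ← mul_add, cyclesProj_add_mul_d]
  rw [ha, map_add, hG.extend_mul_cycle (cyclesProj hA hz a).2, hG.extend_mul_cycle (hA.d_sq a),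
    hG.extend_mul_contraction hz hzz hcomm, ← sepRMul_mul, ← sepRMul_add,
    cyclesProj_add_mul_d]

include hG in
lemma sepMul_extend (x : A) : sepMul φ (F x) = x := by
  rw [extendByContraction_apply, map_add, sepMul_sepLMul, hG.sepMul_map, hG.sepMul_map, hA.d_sq,
    mul_zero, sub_zero, sub_add_cancel]

include hG hz in
lemma sepDiff_extend (x : A) : sepDiff hA hφ (F x) = F (dA x) := by
  rw [extendByContraction_apply, extendByContraction_apply, map_add, sepDiff_sepLMul,
    hG.sepDiff_map, hG.sepDiff_map, hz.d_eq_one, signMap_of_mem_neg_one hz.mem, sepLMul_one,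
    hA.d_sq, map_zero, map_zero, map_zero, zero_add, add_zero]

include hG hz hzz hcomm in
theorem isDGSeparable : IsDGSeparable φ 𝒜 dA :=
  ⟨(sepDiff hA hφ).toAddMonoidHom, isSepDiff_sepDiff hA hφ, F,
    isSepSection_of_map_mul hG.sepMul_extend (hG.extend_mul_left hz hzz hcomm)
      (hG.extend_mul_right hz hzz hcomm),
    fun _ _ => hG.extend_mem hz, hG.sepDiff_extend hz⟩

end IsCyclesSplitting

end Extension

section Restriction

variable {A B : Type} [Ring A] [Ring B] {𝒜 : ℤ → AddSubgroup A} [GradedRing 𝒜]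
  {𝒝 : ℤ → AddSubgroup B} [GradedRing 𝒝] {dA : A →+ A} {dB : B →+ B} {φ : B →+* A}
  {hA : IsDGRing 𝒜 dA} {hB : IsDGRing 𝒝 dB} {ψ : cyclesSubring 𝒝 dB hB →+* cyclesSubring 𝒜 dA hA}

theorem IsGrSeparable.exists_isCyclesSplitting (hcomm : IsGradedComm 𝒜)
    (hφ : IsDGHom 𝒝 dB 𝒜 dA φ) (hψ : ∀ c, (ψ c : A) = φ c) {w : B}
    (hz : IsContractingElement 𝒜 dA (φ w)) (hzz : φ w * φ w = 0)
    (h : IsGrSeparable ψ (cyclesGrading 𝒜 dA hA)) :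
    ∃ G, IsCyclesSplitting hA hφ (φ w) G := by
  obtain ⟨ρ₀, hρ₀, hgr⟩ := h
  let P := cyclesProjRingHom hA hz hcomm hzz
  let ι := SepTensor.map (cyclesSubring 𝒜 dA hA).subtype (cyclesSubring 𝒝 dB hB).subtype hψ
  have hP : ∀ {c} (hc : dA c = 0), P c = ⟨c, hc⟩ := cyclesProj_of_cycle hA hz
  refine ⟨ι.toAddMonoidHom.comp (ρ₀.comp P.toAddMonoidHom), fun c x hc => ?_, fun x c hc => ?_,
    fun x => ?_, fun x => ?_, fun n x hx => ?_, fun x => ?_⟩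
  · show ι (ρ₀ (P (c * x))) = sepLMul φ c (ι (ρ₀ (P x)))
    rw [map_mul, hP hc, hρ₀.map_mul_left]
    exact SepTensor.map_sepLMul _ _
  · show ι (ρ₀ (P (x * c))) = sepRMul φ c (ι (ρ₀ (P x)))
    rw [map_mul, hP hc, hρ₀.map_mul_right]
    exact SepTensor.map_sepRMul _ _
  · show ι (ρ₀ (P (φ w * x))) = 0
    rw [show P (φ w * x) = 0 from cyclesProj_contraction_mul hA hz hzz x, map_zero, map_zero]
  · show sepMul φ (ι (ρ₀ (P x))) = x - φ w * dA x
    exact (SepTensor.sepMul_map _).trans (by rw [hρ₀.1]; rfl)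
  · show ι (ρ₀ (P x)) ∈ _
    exact SepTensor.map_mem_sepGrading (fun _ _ hc => hc) (hgr n _ (cyclesProj_mem hA hz hx))
  · show sepDiff hA hφ (ι (ρ₀ (P x))) = 0
    exact sepDiff_map_subtype hA hφ _

end Restriction

theorem acyclic_dgSeparable_iff_cycles_grSeparable_general
    {K A B : Type} [Field K] [Ring A] [Ring B] [Algebra K A] [Algebra K B]
    (hKchar : (2 : K) ≠ 0)
    (𝒜 : ℤ → AddSubgroup A) [GradedRing 𝒜] (𝒝 : ℤ → AddSubgroup B) [GradedRing 𝒝]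
    (dA : A →+ A) (dB : B →+ B)
    (hA : IsDGRing 𝒜 dA) (hB : IsDGRing 𝒝 dB)
    (hAcomm : IsGradedComm 𝒜)
    (hBacyclic : IsAcyclic dB)
    (φ : B →ₐ[K] A) (hφ : IsDGHom 𝒝 dB 𝒜 dA φ.toRingHom)
    (ψ : cyclesSubring 𝒝 dB hB →+* cyclesSubring 𝒜 dA hA)
    (hψ : ∀ x : cyclesSubring 𝒝 dB hB, (ψ x : A) = φ (x : B)) :
    IsAcyclic dA ∧
      (IsDGSeparable φ.toRingHom 𝒜 dA ↔ IsGrSeparable ψ (cyclesGrading 𝒜 dA hA)) := by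
  obtain ⟨w, hw⟩ := exists_isContractingElement hB hBacyclic
  have hz := hw.map hφ
  have hzz : φ w * φ w = 0 := hAcomm.mul_self_eq_zero hKchar hz.mem
  refine ⟨hz.isAcyclic hA, fun h => h.isGrSeparable.isGrSeparable_cycles hAcomm hφ hψ hw hzz,
    fun h => ?_⟩
  obtain ⟨G, hG⟩ := h.exists_isCyclesSplitting hAcomm hφ hψ hz hzz
  exact hG.isDGSeparable hz hzz hAcomm

/-- Over a field of characteristic different from `2`, for a
dg-extension `φ : (B,d_B) → (A,d_A)` of graded commutative dg-division rings with
`(B,d_B)` acyclic: `(A,d_A)` is acyclic, and `φ` is dg-separable if and only if the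
induced graded extension `ker d_B → ker d_A` is graded-separable. -/
theorem acyclic_dgSeparable_iff_cycles_grSeparable
    {K A B : Type} [Field K] [Ring A] [Ring B] [Algebra K A] [Algebra K B]
    (hKchar : (2 : K) ≠ 0)
    (𝒜 : ℤ → AddSubgroup A) [GradedRing 𝒜] (𝒝 : ℤ → AddSubgroup B) [GradedRing 𝒝]
    (dA : A →+ A) (dB : B →+ B)
    (hA : IsDGRing 𝒜 dA) (hB : IsDGRing 𝒝 dB)
    (hAK : ∀ (k : K) (x : A), dA (k • x) = k • dA x)
    (hBK : ∀ (k : K) (x : B), dB (k • x) = k • dB x)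
    (hAcomm : IsGradedComm 𝒜) (hBcomm : IsGradedComm 𝒝)
    (hAdiv : IsDGDivisionRing 𝒜 dA) (hBdiv : IsDGDivisionRing 𝒝 dB)
    (hBacyclic : IsAcyclic dB)
    (φ : B →ₐ[K] A) (hφ : IsDGHom 𝒝 dB 𝒜 dA φ.toRingHom)
    (ψ : cyclesSubring 𝒝 dB hB →+* cyclesSubring 𝒜 dA hA)
    (hψ : ∀ x : cyclesSubring 𝒝 dB hB, (ψ x : A) = φ (x : B)) :
    IsAcyclic dA ∧
      (IsDGSeparable φ.toRingHom 𝒜 dA ↔ IsGrSeparable ψ (cyclesGrading 𝒜 dA hA)) :=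
  acyclic_dgSeparable_iff_cycles_grSeparable_general hKchar 𝒜 𝒝 dA dB hA hB hAcomm hBacyclic φ hφ ψ
    hψ
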